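/- Let p ≥ 5 be a prime. Suppose a_1, …, a_{p+1} are nonzero elements of 𝔽_p, b_1, …, b_{p+1} ∈ 𝔽_p with at least one b_j ≠ 0, and the system ∑_{j=1}^{p+1} a_j x_j^{p−1} = 0, ∑_{j=1}^{p+1} b_j x_j = 0 has no non-singular solution in 𝔽_p. Then, after permuting indices, there exist nonzero a, a', b_1, b_2 ∈ 𝔽_p such that the coefficient pairs are (a_1,b_1) = (a, b_1), (a_2,b_2) = (−a, b_2), and (a_j, b_j) = (a', 0) for 3 ≤ j ≤ p+1. -/

import Mathlib

/-!
Since `x ^ (p - 1)` is `1` for `x ≠ 0` and `0` for `x = 0`, a vector with support `S` solves the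
first equation iff `∑ j ∈ S, a j = 0`. Choosing such vectors suitably shows that a system without
non-singular solutions has two properties: the `a j` with `b j = 0` are zero-sum-free, and a
zero-sum set containing two indices `i ≠ j` with `b i, b j ≠ 0` is `{i, j}` itself, with `b`
vanishing off `{i, j}`.

By Cauchy–Davenport each element of a zero-sum-free family in `ZMod p` contributes a new subset
sum. Counting the subset sums of `{j | b j = 0}` and of `{j | b j ≠ 0} \ {l}` then writes `-a l`
as a sum of one of each, which produces a zero-sum set of the second kind. Hence `b` lives on a
pair `{i, j}` with `a i + a j = 0`, and the other `p - 1` coefficients are zero-sum-free; such a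
family has at least `p + 1` subset sums unless it is constant.
-/

open Finset
open scoped Pointwise

section SubsetSums

variable {ι M : Type*} [AddCommMonoid M] {s t : Finset ι} {f : ι → M} {x : ι}

def ZeroSumFree (s : Finset ι) (f : ι → M) : Prop :=
  ∀ T ⊆ s, T.Nonempty → ∑ i ∈ T, f i ≠ 0

theorem ZeroSumFree.mono (hf : ZeroSumFree t f) (hst : s ⊆ t) : ZeroSumFree s f :=
  fun T hT ↦ hf T (hT.trans hst)

theorem ZeroSumFree.ne_zero (hf : ZeroSumFree s f) (hx : x ∈ s) : f x ≠ 0 := by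
  simpa using hf {x} (singleton_subset_iff.2 hx) (singleton_nonempty x)

variable [DecidableEq M]

def subsetSums (s : Finset ι) (f : ι → M) : Finset M :=
  s.powerset.image fun T ↦ ∑ i ∈ T, f i

theorem mem_subsetSums {v : M} : v ∈ subsetSums s f ↔ ∃ T ⊆ s, ∑ i ∈ T, f i = v := by
  simp [subsetSums]

theorem zero_mem_subsetSums : (0 : M) ∈ subsetSums s f :=
  mem_subsetSums.2 ⟨∅, empty_subset s, sum_empty⟩

@[simp]
theorem subsetSums_empty : subsetSums (∅ : Finset ι) f = {0} := by
  simp [subsetSums]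

theorem subsetSums_add_subset_subsetSums_insert [DecidableEq ι] (hx : x ∉ s) :
    subsetSums s f + {0, f x} ⊆ subsetSums (insert x s) f := by
  intro v hv
  obtain ⟨_, hα, β, hβ, rfl⟩ := mem_add.1 hv
  obtain ⟨T, hT, rfl⟩ := mem_subsetSums.1 hα
  rcases mem_insert.1 hβ with rfl | hβ
  · exact mem_subsetSums.2 ⟨T, hT.trans (subset_insert x s), (add_zero _).symm⟩
  · refine mem_subsetSums.2 ⟨insert x T, insert_subset_insert x hT, ?_⟩
    rw [sum_insert fun h ↦ hx (hT h), mem_singleton.1 hβ, add_comm]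

end SubsetSums

theorem ZeroSumFree.neg_notMem_subsetSums {ι M : Type*} [DecidableEq ι] [DecidableEq M]
    [AddCommGroup M] {s : Finset ι} {f : ι → M} {x : ι} (hf : ZeroSumFree (insert x s) f)
    (hx : x ∉ s) : -f x ∉ subsetSums s f := by
  intro hmem
  obtain ⟨T, hT, hsum⟩ := mem_subsetSums.1 hmem
  refine hf (insert x T) (insert_subset_insert x hT) (insert_nonempty x T) ?_
  rw [sum_insert fun h ↦ hx (hT h), hsum, add_neg_cancel]

namespace ZeroSumFree

variable {ι : Type*} [DecidableEq ι] {p : ℕ} [Fact p.Prime] {s t u : Finset ι} {f : ι → ZMod p}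

theorem card_subsetSums_lt_card_subsetSums_insert {x : ι} (hf : ZeroSumFree (insert x s) f)
    (hx : x ∉ s) : #(subsetSums s f) < #(subsetSums (insert x s) f) := by
  have hlt : #(subsetSums s f) < p :=
    (card_lt_univ_of_notMem (hf.neg_notMem_subsetSums hx)).trans_eq (ZMod.card p)
  have hpair : #({0, f x} : Finset (ZMod p)) = 2 :=
    card_pair (hf.ne_zero (mem_insert_self x s)).symm
  have hcd := ZMod.cauchy_davenport (Fact.out : p.Prime) (s := subsetSums s f)
    ⟨0, zero_mem_subsetSums⟩ (insert_nonempty 0 {f x})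
  have hsub := card_le_card (subsetSums_add_subset_subsetSums_insert (f := f) hx)
  rw [hpair] at hcd
  omega

theorem card_subsetSums_add_card_le (hf : ZeroSumFree (t ∪ u) f) (htu : Disjoint t u) :
    #(subsetSums t f) + #u ≤ #(subsetSums (t ∪ u) f) := by
  induction u using Finset.induction_on with
  | empty => simp
  | insert x u hx ih =>
    rw [union_insert] at hf ⊢
    have hxtu : x ∉ t ∪ u := by
      simp [hx, disjoint_right.1 htu (mem_insert_self x u)]
    have hstep := hf.card_subsetSums_lt_card_subsetSums_insert hxtu
    have hih := ih (hf.mono (subset_insert x _)) (disjoint_insert_right.1 htu).2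
    rw [card_insert_of_notMem hx]
    omega

theorem card_lt_card_subsetSums (hf : ZeroSumFree s f) : #s < #(subsetSums s f) := by
  have := card_subsetSums_add_card_le (t := ∅) (by rwa [empty_union]) (disjoint_empty_left s)
  rw [subsetSums_empty, card_singleton, empty_union] at this
  omega

theorem apply_eq_apply_of_card_eq (hf : ZeroSumFree s f) (hs : #s = p - 1) {i j : ι}
    (hi : i ∈ s) (hj : j ∈ s) : f i = f j := by
  by_contra hne
  have hij : i ≠ j := fun h ↦ hne (congrArg f h)
  have hsub : {i, j} ⊆ s := insert_subset hi (singleton_subset_iff.2 hj)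
  have hfi := hf.ne_zero hi
  have hfj := hf.ne_zero hj
  have hfij : f i + f j ≠ 0 := by
    simpa [sum_pair hij] using hf {i, j} hsub (insert_nonempty i {j})
  have hfour : #({0, f i, f j, f i + f j} : Finset (ZMod p)) = 4 := by
    rw [card_insert_of_notMem, card_insert_of_notMem, card_pair]
    · exact fun h ↦ hfi (by linear_combination -h)
    · simp [hne, hfj]
    · simp [hfi.symm, hfj.symm, hfij.symm]
  have hsums : ({0, f i, f j, f i + f j} : Finset (ZMod p)) ⊆ subsetSums {i, j} f := by
    simp only [insert_subset_iff, singleton_subset_iff, mem_subsetSums]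
    exact ⟨⟨∅, by simp⟩, ⟨{i}, by simp⟩, ⟨{j}, by simp⟩, ⟨{i, j}, subset_rfl, sum_pair hij⟩⟩
  have hgrow := (hf.mono (union_sdiff_of_subset hsub).subset).card_subsetSums_add_card_le
    disjoint_sdiff
  rw [union_sdiff_of_subset hsub, card_sdiff_of_subset hsub, card_pair hij, hs] at hgrow
  have hle : #(subsetSums s f) ≤ p := (card_le_univ _).trans_eq (ZMod.card p)
  have hs2 := card_le_card hsub
  rw [card_pair hij] at hs2
  have := card_le_card hsums
  omega

end ZeroSumFree

theorem ZMod.add_eq_univ_of_lt_card_add_card {p : ℕ} [Fact p.Prime] {A B : Finset (ZMod p)}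
    (h : p < #A + #B) : A + B = univ := by
  have hA := (card_le_univ A).trans_eq (ZMod.card p)
  have hB := (card_le_univ B).trans_eq (ZMod.card p)
  have hcd := ZMod.cauchy_davenport (Fact.out : p.Prime) (card_pos.1 (by omega) : A.Nonempty)
    (card_pos.1 (by omega) : B.Nonempty)
  exact eq_univ_of_card _ (le_antisymm (card_le_univ _) (by rw [ZMod.card]; omega))

theorem ZMod.exists_notMem_of_card_lt {p : ℕ} [NeZero p] {C : Finset (ZMod p)} (h : #C < p) :
    ∃ ξ, ξ ∉ C := by
  obtain ⟨ξ, -, hξ⟩ := exists_mem_notMem_of_card_lt_card (s := C) (t := univ)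
    (by rwa [card_univ, ZMod.card])
  exact ⟨ξ, hξ⟩

theorem exists_support_eq_and_sum_mul_eq_zero {ι K : Type*} [Fintype ι] [DecidableEq ι] [Field K]
    (b : ι → K) {S : Finset ι} {i j : ι} (hi : i ∈ S) (hj : j ∈ S) (hij : i ≠ j) (hbj : b j ≠ 0)
    {ξ : K} (hξ : ξ ≠ 0) (hbal : b i * ξ + ∑ l ∈ (S.erase i).erase j, b l ≠ 0) :
    ∃ x : ι → K, (∀ l, x l ≠ 0 ↔ l ∈ S) ∧ x i = ξ ∧ (∀ l ∈ (S.erase i).erase j, x l = 1) ∧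
      ∑ l, b l * x l = 0 := by
  set R := (S.erase i).erase j
  set c := -(b i * ξ + ∑ l ∈ R, b l) / b j
  have hc : c ≠ 0 := div_ne_zero (neg_ne_zero.2 hbal) hbj
  let x : ι → K := fun l ↦ if l = i then ξ else if l = j then c else if l ∈ S then 1 else 0
  have hxi : x i = ξ := if_pos rfl
  have hxj : x j = c := by simp [x, hij.symm]
  have hxR : ∀ l ∈ R, x l = 1 := fun l hl ↦ by
    obtain ⟨hlj, hli, hlS⟩ : l ≠ j ∧ l ≠ i ∧ l ∈ S := by simpa [R] using hl
    simp [x, hli, hlj, hlS]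
  refine ⟨x, fun l ↦ ?_, hxi, hxR, ?_⟩
  · by_cases hli : l = i
    · simp [x, hli, hi, hξ]
    by_cases hlj : l = j
    · subst hlj
      simp [x, hij.symm, hj, hc]
    by_cases hlS : l ∈ S <;> simp [x, hli, hlj, hlS]
  · have hoff : ∀ l ∉ S, b l * x l = 0 := fun l hl ↦ by
      simp [x, hl, ne_of_mem_of_not_mem hi hl |>.symm, ne_of_mem_of_not_mem hj hl |>.symm]
    rw [← sum_subset (subset_univ S) fun l _ ↦ hoff l, ← add_sum_erase S _ hi,
      ← add_sum_erase _ _ (mem_erase.2 ⟨hij.symm, hj⟩),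
      sum_congr rfl fun l hl ↦ by rw [hxR l hl, mul_one], hxj, hxi,
      mul_div_cancel₀ _ hbj]
    ring

section NonsingularSolution

variable {ι : Type*} [Fintype ι] {p : ℕ}

def IsNonsingularSolution (a b x : ι → ZMod p) : Prop :=
  (∑ j, a j * x j ^ (p - 1)) = 0 ∧ (∑ j, b j * x j) = 0 ∧
    ∃ i j, ((p - 1 : ZMod p) * a i * x i ^ (p - 2)) * b j -
      ((p - 1 : ZMod p) * a j * x j ^ (p - 2)) * b i ≠ 0

variable [Fact p.Prime] {a b x : ι → ZMod p} {S : Finset ι}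

theorem isNonsingularSolution_of_support (hx : ∀ l, x l ≠ 0 ↔ l ∈ S) (hSa : ∑ l ∈ S, a l = 0)
    (hb : ∑ l, b l * x l = 0) {i j : ι}
    (hij : a i * x i ^ (p - 2) * b j ≠ a j * x j ^ (p - 2) * b i) :
    IsNonsingularSolution a b x := by
  refine ⟨?_, hb, i, j, ?_⟩
  · have hp : p - 1 ≠ 0 := Nat.sub_ne_zero_of_lt (Fact.out : p.Prime).one_lt
    calc ∑ l, a l * x l ^ (p - 1) = ∑ l ∈ S, a l * x l ^ (p - 1) :=
          (sum_subset (subset_univ S) fun l _ hl ↦ by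
            rw [not_ne_iff.1 (mt (hx l).1 hl), zero_pow hp, mul_zero]).symm
      _ = ∑ l ∈ S, a l := sum_congr rfl fun l hl ↦ by
          rw [ZMod.pow_card_sub_one_eq_one ((hx l).2 hl), mul_one]
      _ = 0 := hSa
  · have hp : (p - 1 : ZMod p) = -1 := by simp
    rw [hp]
    contrapose! hij
    linear_combination -hij

theorem isNonsingularSolution_of_mem_support_of_eq_zero (hx : ∀ l, x l ≠ 0 ↔ l ∈ S)
    (hSa : ∑ l ∈ S, a l = 0) (hb : ∑ l, b l * x l = 0) {l m : ι} (hl : l ∈ S) (hal : a l ≠ 0)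
    (hbl : b l = 0) (hbm : b m ≠ 0) : IsNonsingularSolution a b x :=
  isNonsingularSolution_of_support hx hSa hb (i := l) (j := m) <| by
    rw [hbl, mul_zero]
    exact mul_ne_zero (mul_ne_zero hal (pow_ne_zero _ ((hx l).2 hl))) hbm

end NonsingularSolution

namespace NoNonsingularSolution

variable {ι : Type*} [Fintype ι] [DecidableEq ι] {p : ℕ} [Fact p.Prime] {a b : ι → ZMod p}

theorem zeroSumFree_filter_eq_zero (ha : ∀ j, a j ≠ 0) (hb : ∃ j, b j ≠ 0)
    (hns : ¬ ∃ x, IsNonsingularSolution a b x) : ZeroSumFree {l | b l = 0} a := by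
  rintro T hT ⟨l, hl⟩ hsum
  obtain ⟨m, hm⟩ := hb
  have hbT : ∀ k ∈ T, b k = 0 := fun k hk ↦ (mem_filter.1 (hT hk)).2
  have hsupp : ∀ k, (if k ∈ T then 1 else 0 : ZMod p) ≠ 0 ↔ k ∈ T := fun k ↦ by
    by_cases hk : k ∈ T <;> simp [hk]
  have hbx : ∑ k, b k * (if k ∈ T then 1 else 0 : ZMod p) = 0 := by
    simp only [mul_ite, mul_one, mul_zero, sum_ite_mem, univ_inter]
    exact sum_eq_zero hbT
  exact hns ⟨_, isNonsingularSolution_of_mem_support_of_eq_zero hsupp hsum hbx hl (ha l)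
    (hbT l hl) hm⟩

theorem eq_zero_of_add_eq_zero (hns : ¬ ∃ x, IsNonsingularSolution a b x) (hp : 3 ≤ p)
    {i j k : ι} (hij : i ≠ j) (hki : k ≠ i) (hkj : k ≠ j) (hai : a i ≠ 0)
    (haij : a i + a j = 0) (hbi : b i ≠ 0) (hbj : b j ≠ 0) : b k = 0 := by
  by_contra hbk
  obtain ⟨x, hx, hxi, -, hbx⟩ := exists_support_eq_and_sum_mul_eq_zero b (S := {i, j})
    (mem_insert_self i {j}) (mem_insert_of_mem (mem_singleton_self j)) hij hbj one_ne_zero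
    (by simpa [hij] using hbi)
  refine hns ⟨x, isNonsingularSolution_of_support hx (by rwa [sum_pair hij]) hbx
    (i := i) (j := k) ?_⟩
  have hxk : x k = 0 := not_ne_iff.1 fun h ↦ by simp_all
  rw [hxi, hxk, zero_pow (by omega), one_pow]
  simpa using ⟨hai, hbk⟩

theorem eq_pair_of_sum_eq_zero (ha : ∀ j, a j ≠ 0) (hns : ¬ ∃ x, IsNonsingularSolution a b x)
    (hp : 5 ≤ p) {S : Finset ι} (hS : ∑ l ∈ S, a l = 0) {i j : ι} (hi : i ∈ S) (hj : j ∈ S)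
    (hij : i ≠ j) (hbi : b i ≠ 0) (hbj : b j ≠ 0) : S = {i, j} := by
  refine Subset.antisymm (fun k hkS ↦ ?_) (insert_subset hi (singleton_subset_iff.2 hj))
  by_contra hk
  obtain ⟨hki, hkj⟩ : k ≠ i ∧ k ≠ j := by simpa using hk
  have hkR : k ∈ (S.erase i).erase j := by simp [hki, hkj, hkS]
  by_cases hzero : ∃ l ∈ (S.erase i).erase j, b l = 0
  · obtain ⟨l, hlR, hbl⟩ := hzero
    obtain ⟨ξ, hξ⟩ := ZMod.exists_notMem_of_card_lt
      (C := {0, -(∑ l ∈ (S.erase i).erase j, b l) / b i}) ((card_le_two).trans_lt (by omega))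
    simp only [mem_insert, mem_singleton, not_or] at hξ
    obtain ⟨x, hx, -, -, hbx⟩ := exists_support_eq_and_sum_mul_eq_zero b hi hj hij hbj hξ.1
      (fun h ↦ hξ.2 (by field_simp; linear_combination h))
    exact hns ⟨x, isNonsingularSolution_of_mem_support_of_eq_zero hx hS hbx
      (mem_of_mem_erase (mem_of_mem_erase hlR)) (ha l) hbl hbi⟩
  · simp only [not_exists, not_and] at hzero
    -- `x j = ξ`, `x k` balances `∑ b l * x l`, `x = 1` elsewhere on `S`; the three excluded
    -- values of `ξ` would make `x j` or `x k` vanish or kill the `(i, j)` minor.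
    obtain ⟨ξ, hξ⟩ := ZMod.exists_notMem_of_card_lt
      (C := {0, -(∑ l ∈ (S.erase j).erase k, b l) / b j, a j * b i / (a i * b j)})
      ((card_le_three).trans_lt (by omega))
    simp only [mem_insert, mem_singleton, not_or] at hξ
    obtain ⟨hξ0, hξbal, hξminor⟩ := hξ
    obtain ⟨x, hx, hxj, hR, hbx⟩ := exists_support_eq_and_sum_mul_eq_zero b hj hkS hkj.symm
      (hzero k hkR) hξ0 (fun h ↦ hξbal (by field_simp; linear_combination h))
    have hxi : x i = 1 := hR i (by simp [hij, hki.symm, hi])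
    refine hns ⟨x, isNonsingularSolution_of_support hx hS hbx (i := i) (j := j) fun h ↦ hξminor ?_⟩
    have hξp : ξ ^ (p - 2) * ξ = 1 := by
      rw [← pow_succ, show p - 2 + 1 = p - 1 by omega, ZMod.pow_card_sub_one_eq_one hξ0]
    rw [hxi, hxj, one_pow, mul_one] at h
    rw [eq_div_iff (mul_ne_zero (ha i) hbj)]
    linear_combination ξ * h + a j * b i * hξp

theorem zeroSumFree_erase (ha : ∀ j, a j ≠ 0) (hns : ¬ ∃ x, IsNonsingularSolution a b x)
    (hp : 5 ≤ p) {l : ι} (hl : b l ≠ 0) : ZeroSumFree (({k | b k ≠ 0} : Finset ι).erase l) a := by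
  rintro T hT ⟨i, hi⟩ hsum
  have hbT : ∀ k ∈ T, b k ≠ 0 := fun k hk ↦ (mem_filter.1 (mem_of_mem_erase (hT hk))).2
  rcases eq_singleton_or_nontrivial hi with rfl | hTn
  · exact ha i (by simpa using hsum)
  obtain ⟨j, hj, hji⟩ := hTn.exists_ne i
  have hTij := eq_pair_of_sum_eq_zero ha hns hp hsum hi hj hji.symm (hbT i hi) (hbT j hj)
  rw [hTij, sum_pair hji.symm] at hsum
  have hlT : l ∉ T := fun h ↦ (ne_of_mem_erase (hT h)) rfl
  rw [hTij] at hlT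
  exact hl (eq_zero_of_add_eq_zero hns (by omega) hji.symm (by simp_all) (by simp_all) (ha i)
    hsum (hbT i hi) (hbT j hj))

theorem exists_pair_add_eq_zero (ha : ∀ j, a j ≠ 0) (hb : ∃ j, b j ≠ 0)
    (hns : ¬ ∃ x, IsNonsingularSolution a b x) (hp : 5 ≤ p) (hcard : p < Fintype.card ι) :
    ∃ i j, i ≠ j ∧ b i ≠ 0 ∧ b j ≠ 0 ∧ a i + a j = 0 ∧ ∀ k, k ≠ i → k ≠ j → b k = 0 := by
  have hW := zeroSumFree_filter_eq_zero ha hb hns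
  obtain ⟨l, hl⟩ := hb
  have hZ := zeroSumFree_erase ha hns hp hl
  set Z : Finset ι := {k | b k ≠ 0}
  set W : Finset ι := {k | b k = 0}
  have hlZ : l ∈ Z := mem_filter.2 ⟨mem_univ l, hl⟩
  have hsums : p < #((subsetSums (Z.erase l) a).erase 0) + #(subsetSums W a) := by
    have hZW : #W + #Z = Fintype.card ι := card_filter_add_card_filter_not _
    have hZl := hZ.card_lt_card_subsetSums
    rw [card_erase_of_mem hlZ] at hZl
    rw [card_erase_of_mem zero_mem_subsetSums]
    have := hW.card_lt_card_subsetSums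
    have := card_pos.2 ⟨l, hlZ⟩
    omega
  -- `q + w = -a l` with `q ≠ 0` a subset sum of `Z.erase l` and `w` one of `W`.
  obtain ⟨q, hq, w, hw, hqw⟩ :=
    mem_add.1 ((ZMod.add_eq_univ_of_lt_card_add_card hsums).symm ▸ mem_univ (-a l))
  obtain ⟨Q, hQ, rfl⟩ := mem_subsetSums.1 (mem_of_mem_erase hq)
  obtain ⟨T, hT, rfl⟩ := mem_subsetSums.1 hw
  obtain ⟨i, hi⟩ := nonempty_of_sum_ne_zero (ne_of_mem_erase hq)
  have hli : l ≠ i := fun h ↦ (ne_of_mem_erase (hQ hi)) h.symm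
  have hbi : b i ≠ 0 := (mem_filter.1 (mem_of_mem_erase (hQ hi))).2
  have hQT : Disjoint Q T := disjoint_left.2 fun k hkQ hkT ↦
    (mem_filter.1 (mem_of_mem_erase (hQ hkQ))).2 (mem_filter.1 (hT hkT)).2
  have hlQT : l ∉ Q ∪ T := by
    simp only [mem_union, not_or]
    exact ⟨fun h ↦ (ne_of_mem_erase (hQ h)) rfl, fun h ↦ hl (mem_filter.1 (hT h)).2⟩
  have hS : ∑ k ∈ insert l (Q ∪ T), a k = 0 := by
    rw [sum_insert hlQT, sum_union hQT]
    linear_combination hqw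
  have hpair := eq_pair_of_sum_eq_zero ha hns hp hS (mem_insert_self l _)
    (mem_insert_of_mem (mem_union_left T hi)) hli hl hbi
  rw [hpair, sum_pair hli] at hS
  exact ⟨l, i, hli, hl, hbi, hS, fun k hkl hki ↦
    eq_zero_of_add_eq_zero hns (by omega) hli hkl hki (ha l) hS hl hbi⟩

end NoNonsingularSolution

theorem Equiv.Perm.exists_apply_eq_and_apply_eq {α : Type*} [DecidableEq α] {u v i j : α}
    (huv : u ≠ v) (hij : i ≠ j) : ∃ σ : Equiv.Perm α, σ u = i ∧ σ v = j := by
  have hj : Equiv.swap u i j ≠ u := fun h ↦ hij (by simpa using congrArg (Equiv.swap u i) h.symm)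
  refine ⟨Equiv.swap u i * Equiv.swap v (Equiv.swap u i j), ?_, ?_⟩
  · rw [Equiv.Perm.mul_apply, Equiv.swap_apply_of_ne_of_ne huv hj.symm, Equiv.swap_apply_left]
  · rw [Equiv.Perm.mul_apply, Equiv.swap_apply_left, Equiv.swap_apply_self]

theorem stmt_8 (p : ℕ) (hp : p.Prime) (hp5 : 5 ≤ p)
    (a b : Fin (p + 1) → ZMod p) (ha : ∀ j, a j ≠ 0) (hb : ∃ j, b j ≠ 0)
    (hns : ¬ ∃ x : Fin (p + 1) → ZMod p,
      (∑ j, a j * x j ^ (p - 1)) = 0 ∧ (∑ j, b j * x j) = 0 ∧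
      ∃ i j, ((p - 1 : ZMod p) * a i * x i ^ (p - 2)) * b j -
             ((p - 1 : ZMod p) * a j * x j ^ (p - 2)) * b i ≠ 0) :
    ∃ (σ : Equiv.Perm (Fin (p + 1))) (A A' B₁ B₂ : ZMod p),
      A ≠ 0 ∧ A' ≠ 0 ∧ B₁ ≠ 0 ∧ B₂ ≠ 0 ∧
      a (σ 0) = A ∧ a (σ 1) = -A ∧ b (σ 0) = B₁ ∧ b (σ 1) = B₂ ∧
      ∀ j : Fin (p + 1), 2 ≤ (j : ℕ) → a (σ j) = A' ∧ b (σ j) = 0 := by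
  have : Fact p.Prime := ⟨hp⟩
  obtain ⟨i, j, hij, hbi, hbj, haij, hb0⟩ :=
    NoNonsingularSolution.exists_pair_add_eq_zero ha hb hns hp5 (by simp)
  have hrest : ZeroSumFree ({i, j}ᶜ : Finset (Fin (p + 1))) a :=
    (NoNonsingularSolution.zeroSumFree_filter_eq_zero ha hb hns).mono fun k hk ↦ by simp_all
  have hcard : #({i, j}ᶜ : Finset (Fin (p + 1))) = p - 1 := by
    rw [card_compl, card_pair hij, Fintype.card_fin]
    omega
  obtain ⟨σ, hσ0, hσ1⟩ := Equiv.Perm.exists_apply_eq_and_apply_eq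
    (u := (0 : Fin (p + 1))) (v := 1) (by simp) hij
  have hσrest : ∀ u : Fin (p + 1), 2 ≤ (u : ℕ) → σ u ≠ i ∧ σ u ≠ j := by
    intro u hu
    rw [← hσ0, ← hσ1, σ.injective.ne_iff, σ.injective.ne_iff]
    constructor <;> rintro rfl <;> simp [Nat.mod_eq_of_lt (by omega : 1 < p + 1)] at hu
  have hmem : ∀ u : Fin (p + 1), 2 ≤ (u : ℕ) → σ u ∈ ({i, j}ᶜ : Finset (Fin (p + 1))) :=
    fun u hu ↦ by simpa using hσrest u hu
  let two : Fin (p + 1) := ⟨2, by omega⟩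
  refine ⟨σ, a i, a (σ two), b i, b j, ha i, ha _, hbi, hbj, by rw [hσ0],
    by rw [hσ1]; linear_combination haij, by rw [hσ0], by rw [hσ1], fun u hu ↦
      ⟨hrest.apply_eq_apply_of_card_eq hcard (hmem u hu) (hmem two le_rfl),
        hb0 _ (hσrest u hu).1 (hσrest u hu).2⟩⟩
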